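/- arXiv:2212.10135 — 2 statements merged into one kernel-verified Lean document; each statement's English description precedes it below -/
import Mathlib

section
/- Let d ≥ 1, let V : ℝ^d → ℝ be smooth, let β > 0, and let κ : ℝ × ℝ^d × ℝ^d → ℝ be smooth. Assume there is a compact set K ⊆ ℝ^d such that for all t ∈ ℝ and x ∈ ℝ^d the function y ↦ κ(t,x,y) is supported in K. Assume κ satisfies the Fokker–Planck equation of the augmented overdamped Langevin dynamics: ∂_t κ(t,x,y) = div_x(∇V(x) κ(t,x,y)) + β⁻¹ Δ_x κ(t,x,y) + div_y(∇²V(x) y · κ(t,x,y)) for all (t,x,y). Define φ : ℝ × ℝ^d → ℝ^d by φ(t,x) = ∫_{ℝ^d} y κ(t,x,y) dy. Then for every i ∈ {1,…,d} and all (t,x): ∂_t φ_i(t,x) = div_x(∇V(x) φ_i(t,x)) + β⁻¹ Δ_x φ_i(t,x) − Σ_{j=1}^d ∂²_{x_i x_j}V(x) φ_j(t,x). -/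
open MeasureTheory

/-- `i`-th partial derivative of a function on `ℝ^d`. -/
noncomputable def pd {d : ℕ} (i : Fin d) (f : (Fin d → ℝ) → ℝ) (x : Fin d → ℝ) : ℝ :=
  fderiv ℝ f x (Pi.single i 1)

/-- Laplacian of a function on `ℝ^d`. -/
noncomputable def lap {d : ℕ} (f : (Fin d → ℝ) → ℝ) (x : Fin d → ℝ) : ℝ :=
  ∑ i, pd i (fun y => pd i f y) x

/-- Hessian matrix entries of `V`: `hess V x i j = ∂_i ∂_j V (x)`. -/
noncomputable def hess {d : ℕ} (V : (Fin d → ℝ) → ℝ) (x : Fin d → ℝ) (i j : Fin d) : ℝ :=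
  pd i (fun y => pd j V y) x

/-- Divergence of a vector field on `ℝ^d`. -/
noncomputable def dvg {d : ℕ} (F : (Fin d → ℝ) → Fin d → ℝ) (x : Fin d → ℝ) : ℝ :=
  ∑ i, pd i (fun y => F y i) x

section WittenAux

open Metric Set Function

variable {d : ℕ}

lemma pd_def (j : Fin d) (f : (Fin d → ℝ) → ℝ) (x : Fin d → ℝ) :
    pd j f x = fderiv ℝ f x (Pi.single j 1) := rfl

lemma contDiff_proj' (i : Fin d) : ContDiff ℝ (⊤ : ℕ∞) (fun y : Fin d → ℝ => y i) :=
  (ContinuousLinearMap.proj (R := ℝ) (φ := fun _ : Fin d => ℝ) i).contDiff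

lemma pd_const_mul' {f : (Fin d → ℝ) → ℝ} {x : Fin d → ℝ} (hf : DifferentiableAt ℝ f x)
    (c : ℝ) (j : Fin d) :
    pd j (fun x' => c * f x') x = c * pd j f x := by
  unfold pd; rw [fderiv_const_mul hf]; simp

lemma pd_zero' (j : Fin d) (x : Fin d → ℝ) : pd j (fun _ => (0:ℝ)) x = 0 := by
  simp [pd]

lemma integrable_of_support_subset' {f : (Fin d → ℝ) → ℝ} (hf : Continuous f)
    {K : Set (Fin d → ℝ)} (hK : IsCompact K) (h : ∀ y ∉ K, f y = 0) :
    Integrable f :=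
  hf.integrable_of_hasCompactSupport (HasCompactSupport.intro hK h)

lemma contDiff_pd_param {E : Type*} [NormedAddCommGroup E] [NormedSpace ℝ E]
    (g : (Fin d → ℝ) → E → ℝ)
    (hg : ContDiff ℝ (⊤ : ℕ∞) fun p : (Fin d → ℝ) × E => g p.1 p.2) (j : Fin d) :
    ContDiff ℝ (⊤ : ℕ∞) fun p : (Fin d → ℝ) × E => pd j (fun x' => g x' p.2) p.1 := by
  have h1 : ContDiff ℝ (⊤ : ℕ∞) fun p : (Fin d → ℝ) × E =>
      fderiv ℝ (fun x' => g x' p.2) p.1 := by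
    apply ContDiff.fderiv (f := fun (p : (Fin d → ℝ) × E) x' => g x' p.2)
      (g := Prod.fst) (m := ((⊤ : ℕ∞) : WithTop ℕ∞)) ?_ contDiff_fst (by simp)
    exact hg.comp (contDiff_snd.prodMk (contDiff_snd.comp (contDiff_fst (𝕜 := ℝ) (E := (Fin d → ℝ) × E) (F := Fin d → ℝ))))
  exact h1.clm_apply contDiff_const

lemma key_hasFDerivAt {E : Type*} [NormedAddCommGroup E] [NormedSpace ℝ E]
    [FiniteDimensional ℝ E]
    (g : E → (Fin d → ℝ) → ℝ)
    (hg : ContDiff ℝ (⊤ : ℕ∞) (fun p : E × (Fin d → ℝ) => g p.1 p.2))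
    {K : Set (Fin d → ℝ)} (hK : IsCompact K)
    (hs : ∀ x y, y ∉ K → g x y = 0) (x₀ : E) :
    HasFDerivAt (fun x => ∫ y, g x y)
      (∫ y, fderiv ℝ (fun x => g x y) x₀) x₀ := by
  have hgc : Continuous (fun p : E × (Fin d → ℝ) => g p.1 p.2) := hg.continuous
  have hF' : Continuous (fun p : E × (Fin d → ℝ) =>
      fderiv ℝ (fun x' => g x' p.2) p.1) := by
    have h1 : ContDiff ℝ (⊤ : ℕ∞) fun p : E × (Fin d → ℝ) =>
        fderiv ℝ (fun x' => g x' p.2) p.1 := by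
      apply ContDiff.fderiv (f := fun (p : E × (Fin d → ℝ)) x' => g x' p.2)
        (g := Prod.fst) (m := ((⊤ : ℕ∞) : WithTop ℕ∞)) ?_ contDiff_fst (by simp)
      exact hg.comp (contDiff_snd.prodMk (contDiff_snd.comp (contDiff_fst (𝕜 := ℝ) (E := E × (Fin d → ℝ)) (F := E))))
    exact h1.continuous
  have hdiff : ∀ (y : Fin d → ℝ) (x : E), DifferentiableAt ℝ (fun x' => g x' y) x := by
    intro y x
    have : ContDiff ℝ (⊤ : ℕ∞) (fun x' => g x' y) :=
      hg.comp (contDiff_id.prodMk contDiff_const)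
    exact (this.differentiable (by simp)).differentiableAt
  have hF'0 : ∀ (x : E) (y : Fin d → ℝ), y ∉ K →
      fderiv ℝ (fun x' => g x' y) x = 0 := by
    intro x y hy
    have : (fun x' => g x' y) = fun _ => (0:ℝ) := funext fun x' => hs x' y hy
    rw [this]
    exact fderiv_const_apply 0
  obtain ⟨C, hC⟩ : ∃ C, ∀ p ∈ (closedBall x₀ 1) ×ˢ K,
      ‖fderiv ℝ (fun x' => g x' p.2) p.1‖ ≤ C :=
    (isCompact_closedBall x₀ 1 |>.prod hK).exists_bound_of_continuousOn hF'.continuousOn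
  refine hasFDerivAt_integral_of_dominated_of_fderiv_le (𝕜 := ℝ) (H := E) (μ := volume)
    (F' := fun x y => fderiv ℝ (fun x' => g x' y) x) (s := ball x₀ 1) (ball_mem_nhds x₀ one_pos)
    (.of_forall fun x => (hgc.comp (continuous_const.prodMk continuous_id)).aestronglyMeasurable)
    ?_ ?_ (bound := K.indicator fun _ => C) (.of_forall ?_) ?_ (.of_forall ?_)
  · exact (hgc.comp (continuous_const.prodMk continuous_id)).integrable_of_hasCompactSupport
      (HasCompactSupport.intro hK fun y hy => hs x₀ y hy)
  · exact (hF'.comp (continuous_const.prodMk continuous_id)).aestronglyMeasurable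
  · intro y x hx
    by_cases hy : y ∈ K
    · rw [indicator_of_mem hy]
      exact hC (x, y) ⟨ball_subset_closedBall hx, hy⟩
    · rw [indicator_of_notMem hy]
      rw [hF'0 x y hy]
      simp
  · rw [integrable_indicator_iff hK.isClosed.measurableSet]
    exact integrableOn_const hK.measure_lt_top.ne
  · intro y x hx
    exact (hdiff y x).hasFDerivAt

lemma key_fderiv_apply {E : Type*} [NormedAddCommGroup E] [NormedSpace ℝ E]
    [FiniteDimensional ℝ E]
    (g : E → (Fin d → ℝ) → ℝ)
    (hg : ContDiff ℝ (⊤ : ℕ∞) (fun p : E × (Fin d → ℝ) => g p.1 p.2))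
    {K : Set (Fin d → ℝ)} (hK : IsCompact K)
    (hs : ∀ x y, y ∉ K → g x y = 0) (x₀ : E) (v : E) :
    fderiv ℝ (fun x => ∫ y, g x y) x₀ v = ∫ y, fderiv ℝ (fun x => g x y) x₀ v := by
  rw [(key_hasFDerivAt g hg hK hs x₀).fderiv]
  have hi : Integrable (fun y => fderiv ℝ (fun x => g x y) x₀) := by
    have h1 : ContDiff ℝ (⊤ : ℕ∞) fun p : E × (Fin d → ℝ) =>
        fderiv ℝ (fun x' => g x' p.2) p.1 := by
      apply ContDiff.fderiv (f := fun (p : E × (Fin d → ℝ)) x' => g x' p.2)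
        (g := Prod.fst) (m := ((⊤ : ℕ∞) : WithTop ℕ∞)) ?_ contDiff_fst (by simp)
      exact hg.comp (contDiff_snd.prodMk (contDiff_snd.comp (contDiff_fst (𝕜 := ℝ) (E := E × (Fin d → ℝ)) (F := E))))
    apply (h1.continuous.comp
      (continuous_const.prodMk continuous_id)).integrable_of_hasCompactSupport
    apply HasCompactSupport.intro hK
    intro y hy
    have : (fun x' => g x' y) = fun _ => (0:ℝ) := funext fun x' => hs x' y hy
    show fderiv ℝ (fun x' => g x' y) x₀ = 0
    rw [this]
    exact fderiv_const_apply 0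
  exact ContinuousLinearMap.integral_apply hi v

lemma pd_integral
    (g : (Fin d → ℝ) → (Fin d → ℝ) → ℝ)
    (hg : ContDiff ℝ (⊤ : ℕ∞) (fun p : (Fin d → ℝ) × (Fin d → ℝ) => g p.1 p.2))
    {K : Set (Fin d → ℝ)} (hK : IsCompact K)
    (hs : ∀ x y, y ∉ K → g x y = 0) (j : Fin d) (x : Fin d → ℝ) :
    pd j (fun x' => ∫ y, g x' y) x = ∫ y, pd j (fun x' => g x' y) x :=
  key_fderiv_apply g hg hK hs x (Pi.single j 1)

lemma deriv_integral_param
    (g : ℝ → (Fin d → ℝ) → ℝ)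
    (hg : ContDiff ℝ (⊤ : ℕ∞) (fun p : ℝ × (Fin d → ℝ) => g p.1 p.2))
    {K : Set (Fin d → ℝ)} (hK : IsCompact K)
    (hs : ∀ x y, y ∉ K → g x y = 0) (t : ℝ) :
    deriv (fun s => ∫ y, g s y) t = ∫ y, deriv (fun s => g s y) t := by
  have := key_fderiv_apply g hg hK hs t 1
  simpa only [fderiv_apply_one_eq_deriv] using this

end WittenAux


set_option maxHeartbeats 1000000 in
/-- If `κ` is a smooth solution of the Fokker–Planck equation of the
augmented overdamped Langevin dynamics, with compact support (contained in a fixed compact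
set `K`) in the `y` variable, then `φ(t,x) = ∫ y κ(t,x,y) dy` solves the Witten partial
differential equation `∂_t φ = L̃* φ`, componentwise. -/
theorem witten_pde_probabilistic_representation
    {d : ℕ} (hd : 1 ≤ d)
    (V : (Fin d → ℝ) → ℝ) (hV : ContDiff ℝ (⊤ : ℕ∞) V)
    (β : ℝ) (hβ : 0 < β)
    (κ : ℝ → (Fin d → ℝ) → (Fin d → ℝ) → ℝ)
    (hκ : ContDiff ℝ (⊤ : ℕ∞) (fun p : ℝ × (Fin d → ℝ) × (Fin d → ℝ) => κ p.1 p.2.1 p.2.2))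
    (K : Set (Fin d → ℝ)) (hK : IsCompact K)
    (hsupp : ∀ (t : ℝ) (x : Fin d → ℝ), Function.support (fun y => κ t x y) ⊆ K)
    -- the Fokker–Planck equation:
    -- ∂_t κ = div_x(∇V(x) κ) + β⁻¹ Δ_x κ + div_y(∇²V(x) y κ)
    (hFP : ∀ (t : ℝ) (x y : Fin d → ℝ),
      deriv (fun s => κ s x y) t =
        dvg (fun x' i => pd i V x' * κ t x' y) x
        + β⁻¹ * lap (fun x' => κ t x' y) x
        + dvg (fun y' i => (∑ j, hess V x i j * y' j) * κ t x y') y)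
    -- the vector field φ(t,x) = ∫ y κ(t,x,y) dy
    (φ : ℝ → (Fin d → ℝ) → Fin d → ℝ)
    (hφ : ∀ (t : ℝ) (x : Fin d → ℝ) (i : Fin d),
      φ t x i = ∫ y : Fin d → ℝ, y i * κ t x y) :
    -- conclusion: ∂_t φ_i = div_x(∇V φ_i) + β⁻¹ Δ_x φ_i − Σ_j ∂²_{x_i x_j}V φ_j
    ∀ (i : Fin d) (t : ℝ) (x : Fin d → ℝ),
      deriv (fun s => φ s x i) t =
        dvg (fun x' j => pd j V x' * φ t x' i) x
        + β⁻¹ * lap (fun x' => φ t x' i) x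
        - ∑ j, hess V x i j * φ t x j := by
  intro i t x
  have hκ0 : ∀ (s : ℝ) (x' y : Fin d → ℝ), y ∉ K → κ s x' y = 0 := by
    intro s x' y hy
    by_contra h
    exact hy (hsupp s x' h)
  -- smoothness of sections of κ
  have hκt : ContDiff ℝ (⊤ : ℕ∞) fun p : (Fin d → ℝ) × (Fin d → ℝ) => κ t p.1 p.2 :=
    hκ.comp (contDiff_const.prodMk (contDiff_fst.prodMk contDiff_snd))
  have hκx : ContDiff ℝ (⊤ : ℕ∞) fun p : ℝ × (Fin d → ℝ) => κ p.1 x p.2 :=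
    hκ.comp (contDiff_fst.prodMk (contDiff_const.prodMk contDiff_snd))
  have hκtx : ContDiff ℝ (⊤ : ℕ∞) fun y : Fin d → ℝ => κ t x y :=
    hκ.comp (contDiff_const.prodMk (contDiff_const.prodMk contDiff_id))
  have hκsec : ∀ y : Fin d → ℝ, ContDiff ℝ (⊤ : ℕ∞) fun x' : Fin d → ℝ => κ t x' y :=
    fun y => hκt.comp (contDiff_id.prodMk contDiff_const)
  have hVj : ∀ j : Fin d, ContDiff ℝ (⊤ : ℕ∞) (fun x' : Fin d → ℝ => pd j V x') := fun j =>
    (hV.fderiv_right (by simp)).clm_apply contDiff_const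
  -- smoothness of the various integrands
  have sP : ∀ j : Fin d, ContDiff ℝ (⊤ : ℕ∞)
      (fun p : (Fin d → ℝ) × (Fin d → ℝ) => pd j V p.1 * κ t p.1 p.2) := fun j =>
    ((hVj j).comp contDiff_fst).mul hκt
  have sκi : ContDiff ℝ (⊤ : ℕ∞)
      (fun p : (Fin d → ℝ) × (Fin d → ℝ) => p.2 i * κ t p.1 p.2) :=
    ((contDiff_proj' i).comp contDiff_snd).mul hκt
  have shj : ∀ j : Fin d, ContDiff ℝ (⊤ : ℕ∞)
      (fun y' : Fin d → ℝ => (∑ k, hess V x j k * y' k) * κ t x y') := fun j =>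
    (ContDiff.sum fun k _ => contDiff_const.mul (contDiff_proj' k)).mul hκtx
  have hcsj : ∀ j : Fin d, HasCompactSupport
      (fun y' : Fin d → ℝ => (∑ k, hess V x j k * y' k) * κ t x y') := fun j =>
    HasCompactSupport.intro hK fun y hy => by rw [hκ0 t x y hy, mul_zero]
  -- differentiability facts
  have hder : ∀ y : Fin d → ℝ, DifferentiableAt ℝ (fun s => κ s x y) t := fun y =>
    (((hκ.comp ((contDiff_id (E := ℝ)).prodMk (contDiff_const (c := (x, y))))).differentiable
      (by simp)) t)
  -- integrability of the three integrands
  have intPj : ∀ j : Fin d, Integrable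
      (fun y => y i * pd j (fun x' => pd j V x' * κ t x' y) x) := by
    intro j
    apply integrable_of_support_subset' ?_ hK ?_
    · have h1 : ContDiff ℝ (⊤ : ℕ∞) fun y : Fin d → ℝ =>
          pd j (fun x' => pd j V x' * κ t x' y) x :=
        (contDiff_pd_param (fun x' y => pd j V x' * κ t x' y) (sP j) j).comp
          ((contDiff_const (c := x)).prodMk contDiff_id)
      exact ((contDiff_proj' i).continuous).mul h1.continuous
    · intro y hy
      have h0 : (fun x' => pd j V x' * κ t x' y) = fun _ => (0:ℝ) :=
        funext fun x' => by rw [hκ0 t x' y hy, mul_zero]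
      rw [h0, pd_zero', mul_zero]
  have intQj : ∀ j : Fin d, Integrable
      (fun y => y i * pd j (fun x'' => pd j (fun x' => κ t x' y) x'') x) := by
    intro j
    apply integrable_of_support_subset' ?_ hK ?_
    · have h1 : ContDiff ℝ (⊤ : ℕ∞) fun y : Fin d → ℝ =>
          pd j (fun x'' => pd j (fun x' => κ t x' y) x'') x :=
        (contDiff_pd_param (fun x'' y => pd j (fun x' => κ t x' y) x'')
          (contDiff_pd_param (fun x' y => κ t x' y) hκt j) j).comp
          ((contDiff_const (c := x)).prodMk contDiff_id)
      exact ((contDiff_proj' i).continuous).mul h1.continuous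
    · intro y hy
      have h0 : (fun x'' : Fin d → ℝ => pd j (fun x' => κ t x' y) x'')
          = fun _ => (0:ℝ) := by
        funext x''
        have h00 : (fun x' : Fin d → ℝ => κ t x' y) = fun _ => (0:ℝ) :=
          funext fun x' => hκ0 t x' y hy
        rw [h00, pd_zero']
      rw [h0, pd_zero', mul_zero]
  have intCj : ∀ j : Fin d, Integrable
      (fun y => y i * pd j (fun y' => (∑ k, hess V x j k * y' k) * κ t x y') y) := by
    intro j
    apply Continuous.integrable_of_hasCompactSupport
    · have h1 : ContDiff ℝ (⊤ : ℕ∞) fun y : Fin d → ℝ =>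
          pd j (fun y' => (∑ k, hess V x j k * y' k) * κ t x y') y :=
        (((shj j).fderiv_right (by simp)).clm_apply contDiff_const)
      exact ((contDiff_proj' i).continuous).mul h1.continuous
    · have h2 : HasCompactSupport
          (fun y : Fin d → ℝ =>
            fderiv ℝ (fun y' => (∑ k, hess V x j k * y' k) * κ t x y') y (Pi.single j 1)) :=
        HasCompactSupport.comp_left
          (g := fun L : ((Fin d → ℝ) →L[ℝ] ℝ) => L (Pi.single j 1)) ((hcsj j).fderiv ℝ) rfl
      have h2' : HasCompactSupport
          (fun y : Fin d → ℝ =>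
            pd j (fun y' => (∑ k, hess V x j k * y' k) * κ t x y') y) := h2
      exact h2'.mul_left
  have intyk : ∀ k : Fin d, Integrable (fun y : Fin d → ℝ => y k * κ t x y) := by
    intro k
    apply integrable_of_support_subset' ?_ hK ?_
    · exact ((contDiff_proj' k).continuous).mul hκtx.continuous
    · intro y hy; rw [hκ0 t x y hy, mul_zero]
  -- rewrite φ everywhere
  simp only [hφ]
  -- Step 1: differentiate under the integral sign in t
  have step1 : deriv (fun s => ∫ y : Fin d → ℝ, y i * κ s x y) t
      = ∫ y : Fin d → ℝ, y i * deriv (fun s => κ s x y) t := by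
    rw [show deriv (fun s => ∫ y : Fin d → ℝ, y i * κ s x y) t
        = ∫ y : Fin d → ℝ, deriv (fun s => y i * κ s x y) t from
      deriv_integral_param (fun s y => y i * κ s x y)
        (((contDiff_proj' i).comp contDiff_snd).mul hκx) hK
        (fun s y hy => by simp [hκ0 s x y hy]) t]
    congr 1
    funext y
    exact deriv_const_mul (y i) (hder y)
  -- Step 2: the divergence term
  have step2j : ∀ j : Fin d, pd j (fun x' => pd j V x' * ∫ y : Fin d → ℝ, y i * κ t x' y) x
      = ∫ y : Fin d → ℝ, y i * pd j (fun x' => pd j V x' * κ t x' y) x := by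
    intro j
    have e1 : (fun x' => pd j V x' * ∫ y : Fin d → ℝ, y i * κ t x' y)
        = fun x' => ∫ y : Fin d → ℝ, pd j V x' * (y i * κ t x' y) := by
      funext x'
      rw [integral_const_mul]
    rw [e1, show pd j (fun x' => ∫ y : Fin d → ℝ, pd j V x' * (y i * κ t x' y)) x
        = ∫ y : Fin d → ℝ, pd j (fun x' => pd j V x' * (y i * κ t x' y)) x from
      pd_integral (fun x' y => pd j V x' * (y i * κ t x' y))
        (((hVj j).comp contDiff_fst).mul sκi) hK
        (fun x' y hy => by simp [hκ0 t x' y hy]) j x]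
    congr 1
    funext y
    have e2 : (fun x' => pd j V x' * (y i * κ t x' y))
        = fun x' => y i * (pd j V x' * κ t x' y) := by
      funext x'; ring
    rw [e2, pd_const_mul' ((((hVj j).mul (hκsec y)).differentiable (by simp)) x) (y i) j]
  have step2 : dvg (fun x' j => pd j V x' * ∫ y : Fin d → ℝ, y i * κ t x' y) x
      = ∫ y : Fin d → ℝ, y i * dvg (fun x' j => pd j V x' * κ t x' y) x := by
    simp only [dvg]
    have hms : ∀ y : Fin d → ℝ,
        y i * ∑ j, pd j (fun x' => pd j V x' * κ t x' y) x
          = ∑ j, y i * pd j (fun x' => pd j V x' * κ t x' y) x := fun y =>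
      Finset.mul_sum _ _ _
    simp only [hms]
    rw [integral_finset_sum _ (fun j _ => intPj j)]
    exact Finset.sum_congr rfl fun j _ => step2j j
  -- Step 3: the Laplacian term
  have step3j : ∀ j : Fin d,
      pd j (fun x'' => pd j (fun x' => ∫ y : Fin d → ℝ, y i * κ t x' y) x'') x
      = ∫ y : Fin d → ℝ, y i * pd j (fun x'' => pd j (fun x' => κ t x' y) x'') x := by
    intro j
    have e1 : (fun x'' => pd j (fun x' => ∫ y : Fin d → ℝ, y i * κ t x' y) x'')
        = fun x'' => ∫ y : Fin d → ℝ, pd j (fun x' => y i * κ t x' y) x'' := by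
      funext x''
      exact pd_integral (fun x' y => y i * κ t x' y) sκi hK
        (fun x' y hy => by simp [hκ0 t x' y hy]) j x''
    have hsup3 : ∀ (x'' : Fin d → ℝ) (y : Fin d → ℝ), y ∉ K →
        pd j (fun x' => y i * κ t x' y) x'' = 0 := by
      intro x'' y hy
      have h00 : (fun x' : Fin d → ℝ => y i * κ t x' y) = fun _ => (0:ℝ) :=
        funext fun x' => by simp [hκ0 t x' y hy]
      rw [h00, pd_zero']
    rw [e1, show pd j (fun x'' => ∫ y : Fin d → ℝ, pd j (fun x' => y i * κ t x' y) x'') x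
        = ∫ y : Fin d → ℝ, pd j (fun x'' => pd j (fun x' => y i * κ t x' y) x'') x from
      pd_integral (fun x'' y => pd j (fun x' => y i * κ t x' y) x'')
        (contDiff_pd_param (fun x' y => y i * κ t x' y) sκi j) hK hsup3 j x]
    congr 1
    funext y
    have e2 : (fun x'' : Fin d → ℝ => pd j (fun x' => y i * κ t x' y) x'')
        = fun x'' => y i * pd j (fun x' => κ t x' y) x'' := by
      funext x''
      exact pd_const_mul' (((hκsec y).differentiable (by simp)) x'') (y i) j
    have hdQ : DifferentiableAt ℝ
        (fun x'' : Fin d → ℝ => pd j (fun x' => κ t x' y) x'') x := by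
      have hQ : ContDiff ℝ (⊤ : ℕ∞) (fun x'' : Fin d → ℝ => pd j (fun x' => κ t x' y) x'') :=
        (contDiff_pd_param (fun x' y => κ t x' y) hκt j).comp
          ((contDiff_id (E := Fin d → ℝ)).prodMk (contDiff_const (c := y)))
      exact (hQ.differentiable (by simp)) x
    rw [e2, pd_const_mul' hdQ (y i) j]
  have step3 : lap (fun x' => ∫ y : Fin d → ℝ, y i * κ t x' y) x
      = ∫ y : Fin d → ℝ, y i * lap (fun x' => κ t x' y) x := by
    simp only [lap]
    have hms : ∀ y : Fin d → ℝ,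
        y i * ∑ j, pd j (fun x'' => pd j (fun x' => κ t x' y) x'') x
          = ∑ j, y i * pd j (fun x'' => pd j (fun x' => κ t x' y) x'') x := fun y =>
      Finset.mul_sum _ _ _
    simp only [hms]
    rw [integral_finset_sum _ (fun j _ => intQj j)]
    exact Finset.sum_congr rfl fun j _ => step3j j
  -- Step 4: integration by parts in y
  have hproj : ∀ (j : Fin d) (y : Fin d → ℝ),
      fderiv ℝ (fun y : Fin d → ℝ => y i) y (Pi.single j 1) = (Pi.single j 1 : Fin d → ℝ) i := by
    intro j y
    rw [show (fun y : Fin d → ℝ => y i)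
        = ⇑(ContinuousLinearMap.proj (R := ℝ) (φ := fun _ : Fin d => ℝ) i) from rfl,
      ContinuousLinearMap.fderiv]
    rfl
  have ibp : ∀ j : Fin d,
      ∫ y : Fin d → ℝ, y i * pd j (fun y' => (∑ k, hess V x j k * y' k) * κ t x y') y
      = - ((Pi.single j 1 : Fin d → ℝ) i * ∫ y : Fin d → ℝ, (∑ k, hess V x j k * y k) * κ t x y) := by
    intro j
    have int3 : Integrable (fun y : Fin d → ℝ =>
        y i * ((∑ k, hess V x j k * y k) * κ t x y)) := by
      apply integrable_of_support_subset' ?_ hK ?_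
      · exact ((contDiff_proj' i).continuous).mul (shj j).continuous
      · intro y hy; rw [hκ0 t x y hy, mul_zero, mul_zero]
    have int1 : Integrable (fun y : Fin d → ℝ =>
        fderiv ℝ (fun y : Fin d → ℝ => y i) y (Pi.single j 1)
          * ((∑ k, hess V x j k * y k) * κ t x y)) := by
      apply integrable_of_support_subset' ?_ hK ?_
      · simp only [hproj]
        exact continuous_const.mul (shj j).continuous
      · intro y hy; rw [hκ0 t x y hy, mul_zero, mul_zero]
    have keyibp := integral_mul_fderiv_eq_neg_fderiv_mul_of_integrable (μ := volume)
      (f := fun y : Fin d → ℝ => y i)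
      (g := fun y' => (∑ k, hess V x j k * y' k) * κ t x y')
      (v := Pi.single j 1) int1 (by simpa only [pd_def] using intCj j) int3
      (fun z _ => (ContinuousLinearMap.proj (R := ℝ) (φ := fun _ : Fin d => ℝ) i).differentiable z)
      (fun z _ => (shj j).differentiable (by simp) z)
    simp only [pd_def]
    rw [keyibp]
    congr 1
    rw [← integral_const_mul]
    congr 1
    funext y
    rw [hproj j y]
  have step4 : ∫ y : Fin d → ℝ,
      y i * dvg (fun y' j => (∑ k, hess V x j k * y' k) * κ t x y') y
      = - ∑ j, hess V x i j * ∫ y : Fin d → ℝ, y j * κ t x y := by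
    simp only [dvg, Finset.mul_sum]
    rw [integral_finset_sum _ (fun j _ => intCj j)]
    have e1 : ∀ j : Fin d,
        (∫ y : Fin d → ℝ, y i * pd j (fun y' => (∑ k, hess V x j k * y' k) * κ t x y') y)
        = - ((Pi.single j 1 : Fin d → ℝ) i * ∫ y : Fin d → ℝ, (∑ k, hess V x j k * y k) * κ t x y) :=
      ibp
    rw [Finset.sum_congr rfl fun j _ => e1 j]
    have e2 : ∑ j : Fin d,
        -((Pi.single j 1 : Fin d → ℝ) i * ∫ y : Fin d → ℝ, (∑ k, hess V x j k * y k) * κ t x y)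
        = - ∫ y : Fin d → ℝ, (∑ k, hess V x i k * y k) * κ t x y := by
      rw [Finset.sum_neg_distrib]
      congr 1
      simp only [Pi.single_apply]
      rw [Finset.sum_congr rfl (fun j _ => by
        rw [show ((if i = j then (1:ℝ) else 0) * ∫ y : Fin d → ℝ,
          (∑ k, hess V x j k * y k) * κ t x y)
          = if i = j then (∫ y : Fin d → ℝ, (∑ k, hess V x j k * y k) * κ t x y) else 0 from by
            split <;> simp])]
      simp
    rw [e2]
    congr 1
    have e3 : ∀ y : Fin d → ℝ, (∑ k, hess V x i k * y k) * κ t x y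
        = ∑ k, hess V x i k * (y k * κ t x y) := by
      intro y
      rw [Finset.sum_mul]
      exact Finset.sum_congr rfl fun k _ => mul_assoc _ _ _
    simp only [e3]
    rw [integral_finset_sum _ (fun k _ => (intyk k).const_mul _)]
    exact Finset.sum_congr rfl fun k _ => integral_const_mul _ _
  -- integrability of the grouped integrands
  have intA : Integrable (fun y : Fin d → ℝ =>
      y i * dvg (fun x' j => pd j V x' * κ t x' y) x) := by
    have e : (fun y : Fin d → ℝ => y i * dvg (fun x' j => pd j V x' * κ t x' y) x)
        = fun y => ∑ j, y i * pd j (fun x' => pd j V x' * κ t x' y) x := by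
      funext y
      simp [dvg, Finset.mul_sum]
    rw [e]
    exact integrable_finset_sum _ (fun j _ => intPj j)
  have intB : Integrable (fun y : Fin d → ℝ =>
      y i * lap (fun x' => κ t x' y) x) := by
    have e : (fun y : Fin d → ℝ => y i * lap (fun x' => κ t x' y) x)
        = fun y => ∑ j, y i * pd j (fun x'' => pd j (fun x' => κ t x' y) x'') x := by
      funext y
      simp [lap, Finset.mul_sum]
    rw [e]
    exact integrable_finset_sum _ (fun j _ => intQj j)
  have intC : Integrable (fun y : Fin d → ℝ =>
      y i * dvg (fun y' j => (∑ k, hess V x j k * y' k) * κ t x y') y) := by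
    have e : (fun y : Fin d → ℝ =>
        y i * dvg (fun y' j => (∑ k, hess V x j k * y' k) * κ t x y') y)
        = fun y => ∑ j, y i * pd j (fun y' => (∑ k, hess V x j k * y' k) * κ t x y') y := by
      funext y
      simp [dvg, Finset.mul_sum]
    rw [e]
    exact integrable_finset_sum _ (fun j _ => intCj j)
  -- put everything together
  rw [step1, step2, step3]
  have hsum : ∫ y : Fin d → ℝ, y i * deriv (fun s => κ s x y) t
      = ∫ y : Fin d → ℝ,
          (y i * dvg (fun x' j => pd j V x' * κ t x' y) x
           + β⁻¹ * (y i * lap (fun x' => κ t x' y) x)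
           + y i * dvg (fun y' j => (∑ k, hess V x j k * y' k) * κ t x y') y) := by
    congr 1
    funext y
    rw [hFP t x y]
    ring
  have intB' : Integrable (fun y : Fin d → ℝ =>
      β⁻¹ * (y i * lap (fun x' => κ t x' y) x)) := intB.const_mul β⁻¹
  have intAB : Integrable (fun y : Fin d → ℝ =>
      y i * dvg (fun x' j => pd j V x' * κ t x' y) x
        + β⁻¹ * (y i * lap (fun x' => κ t x' y) x)) := intA.add intB'
  rw [hsum, integral_add intAB intC, integral_add intA intB', integral_const_mul, step4]
  ring
end

section
/- Let V : ℝ^d → ℝ be smooth, let h > 0 and set β = 2/h. Then for every smooth vector field v : ℝ^d → ℝ^d, every index i ∈ {1,…,d} and every x ∈ ℝ^d: e^{V(x)/h} · [L̃*(v e^{−V/h})]_i(x) = −(1/(2h)) · [Δ¹_{V,h} v]_i(x). -/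
/-- Squared Euclidean norm of the gradient of `V`. -/
noncomputable def gradNormSq {d : ℕ} (V : (Fin d → ℝ) → ℝ) (x : Fin d → ℝ) : ℝ :=
  ∑ i, (pd i V x) ^ 2

/-- Fokker–Planck operator `L* ρ = div(ρ ∇V) + β⁻¹ Δρ`. -/
noncomputable def FPstar {d : ℕ} (β : ℝ) (V ρ : (Fin d → ℝ) → ℝ) (x : Fin d → ℝ) : ℝ :=
  dvg (fun y i => ρ y * pd i V y) x + β⁻¹ * lap ρ x

/-- The operator `L̃*` acting on vector fields: `[L̃* v]_i = L* v_i − [∇²V v]_i`. -/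
noncomputable def FPstar1 {d : ℕ} (β : ℝ) (V : (Fin d → ℝ) → ℝ)
    (v : (Fin d → ℝ) → Fin d → ℝ) (x : Fin d → ℝ) (i : Fin d) : ℝ :=
  FPstar β V (fun y => v y i) x - ∑ j, hess V x i j * v x j

/-- Witten Laplacian on 1-forms (componentwise):
`Δ¹_{V,h} v = −h² Δv + (|∇V|² − h ΔV) v + 2h (∇²V) v`. -/
noncomputable def Witten1 {d : ℕ} (h : ℝ) (V : (Fin d → ℝ) → ℝ)
    (v : (Fin d → ℝ) → Fin d → ℝ) (x : Fin d → ℝ) (i : Fin d) : ℝ :=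
  -h ^ 2 * lap (fun y => v y i) x + (gradNormSq V x - h * lap V x) * v x i
    + 2 * h * ∑ j, hess V x i j * v x j

lemma contDiff_pd {d : ℕ} {f : (Fin d → ℝ) → ℝ} (hf : ContDiff ℝ (⊤ : ℕ∞) f) (i : Fin d) :
    ContDiff ℝ (⊤ : ℕ∞) (pd i f) :=
  (hf.fderiv_right (m := (⊤ : ℕ∞)) (by simp)).clm_apply contDiff_const

lemma pd_mul {d : ℕ} {f g : (Fin d → ℝ) → ℝ} {x : Fin d → ℝ} (hf : DifferentiableAt ℝ f x)
    (hg : DifferentiableAt ℝ g x) (i : Fin d) :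
    pd i (fun y => f y * g y) x = pd i f x * g x + f x * pd i g x := by
  unfold pd
  rw [fderiv_fun_mul hf hg]
  simp
  ring

lemma pd_sub {d : ℕ} {f g : (Fin d → ℝ) → ℝ} {x : Fin d → ℝ} (hf : DifferentiableAt ℝ f x)
    (hg : DifferentiableAt ℝ g x) (i : Fin d) :
    pd i (fun y => f y - g y) x = pd i f x - pd i g x := by
  unfold pd
  rw [fderiv_fun_sub hf hg]; simp

lemma pd_div_const {d : ℕ} {f : (Fin d → ℝ) → ℝ} {x : Fin d → ℝ}
    (hf : DifferentiableAt ℝ f x) (c : ℝ) (i : Fin d) :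
    pd i (fun y => f y / c) x = pd i f x / c := by
  unfold pd
  simp only [div_eq_mul_inv]
  rw [fderiv_mul_const hf]
  simp [mul_comm]

lemma pd_exp {d : ℕ} {V : (Fin d → ℝ) → ℝ} (hV : ContDiff ℝ (⊤ : ℕ∞) V) (h : ℝ) (j : Fin d)
    (y : Fin d → ℝ) :
    pd j (fun y => Real.exp (-V y / h)) y = -(pd j V y / h) * Real.exp (-V y / h) := by
  have hV' : DifferentiableAt ℝ V y := hV.differentiable (by simp) y
  have h1 : DifferentiableAt ℝ (fun y => -V y / h) y := by
    simp only [div_eq_mul_inv]; exact hV'.neg.mul_const _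
  have h2 : pd j (fun y => -V y / h) y = -(pd j V y) / h := by
    have e1 : (fun y => -V y / h) = fun y => ((0:ℝ) - V y) / h := by funext y; ring
    rw [e1, pd_div_const ((differentiableAt_const 0).fun_sub hV'),
      pd_sub (differentiableAt_const 0) hV']
    simp [pd]
  unfold pd
  rw [fderiv_exp h1]
  simp only [ContinuousLinearMap.coe_smul', Pi.smul_apply, smul_eq_mul]
  have := h2; unfold pd at this
  rw [this]; ring

section Keys
variable {d : ℕ} {V f : (Fin d → ℝ) → ℝ} (hV : ContDiff ℝ (⊤ : ℕ∞) V) (hf : ContDiff ℝ (⊤ : ℕ∞) f)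
  (h : ℝ) (x : Fin d → ℝ)

include hV hf

/-- first derivative of `f·e^{-V/h}` -/
lemma key0 (j : Fin d) (y : Fin d → ℝ) :
    pd j (fun z => f z * Real.exp (-V z / h)) y
      = (pd j f y - f y * pd j V y / h) * Real.exp (-V y / h) := by
  have hE : DifferentiableAt ℝ (fun z => Real.exp (-V z / h)) y := by
    apply DifferentiableAt.exp
    simp only [div_eq_mul_inv]
    exact ((hV.differentiable (by simp) y).neg).mul_const _
  rw [pd_mul (hf.differentiable (by simp) y) hE, pd_exp hV h j y]
  ring

lemma keyA (j : Fin d) :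
    pd j (fun y => f y * Real.exp (-V y / h) * pd j V y) x
      = Real.exp (-V x / h)
        * ((pd j f x - f x * pd j V x / h) * pd j V x + f x * hess V x j j) := by
  have hE : Differentiable ℝ (fun z : Fin d → ℝ => Real.exp (-V z / h)) := by
    apply Differentiable.exp
    simp only [div_eq_mul_inv]
    exact ((hV.differentiable (by simp)).neg).mul_const _
  have h1 : DifferentiableAt ℝ (fun y => f y * Real.exp (-V y / h)) x :=
    (hf.differentiable (by simp) x).mul (hE x)
  rw [pd_mul h1 ((contDiff_pd hV j).differentiable (by simp) x) j, key0 hV hf h j x]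
  show _ = _ * (_ + f x * pd j (fun y => pd j V y) x)
  ring

lemma keyB (j : Fin d) :
    pd j (fun y => pd j (fun z => f z * Real.exp (-V z / h)) y) x
      = Real.exp (-V x / h)
        * (pd j (fun y => pd j f y) x - 2 / h * (pd j f x * pd j V x)
            - f x / h * hess V x j j + f x / h ^ 2 * (pd j V x) ^ 2) := by
  have hE : Differentiable ℝ (fun z : Fin d → ℝ => Real.exp (-V z / h)) := by
    apply Differentiable.exp
    simp only [div_eq_mul_inv]
    exact ((hV.differentiable (by simp)).neg).mul_const _
  have e1 : (fun y => pd j (fun z => f z * Real.exp (-V z / h)) y)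
      = fun y => (pd j f y - f y * pd j V y / h) * Real.exp (-V y / h) := by
    funext y; exact key0 hV hf h j y
  have hfd := hf.differentiable (by simp)
  have hpdf := (contDiff_pd hf j).differentiable (by simp)
  have hpdV := (contDiff_pd hV j).differentiable (by simp)
  have hq : DifferentiableAt ℝ (fun y => f y * pd j V y / h) x := by
    simp only [div_eq_mul_inv]
    exact ((hfd x).mul (hpdV x)).mul_const _
  have hG : DifferentiableAt ℝ (fun y => pd j f y - f y * pd j V y / h) x :=
    (hpdf x).sub hq
  rw [e1, pd_mul hG (hE x) j, pd_exp hV h j x,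
    pd_sub (hpdf x) hq, pd_div_const ((hfd x).fun_mul (hpdV x)),
    pd_mul (hfd x) (hpdV x)]
  simp only [hess]
  ring

end Keys

/-- With `β = 2/h`, for every smooth vector field `v`, every component `i`
and every point `x`: `e^{V(x)/h} · [L̃*(v e^{−V/h})]_i(x) = −(1/(2h)) · [Δ¹_{V,h} v]_i(x)`. -/
theorem witten1_conjugation
    {d : ℕ} (V : (Fin d → ℝ) → ℝ) (hV : ContDiff ℝ (⊤ : ℕ∞) V)
    (v : (Fin d → ℝ) → Fin d → ℝ) (hv : ContDiff ℝ (⊤ : ℕ∞) v)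
    (h : ℝ) (hh : 0 < h) (β : ℝ) (hβ : β = 2 / h)
    (i : Fin d) (x : Fin d → ℝ) :
    Real.exp (V x / h)
        * FPstar1 β V (fun y j => v y j * Real.exp (-V y / h)) x i
      = -(1 / (2 * h)) * Witten1 h V v x i := by
  have hf : ContDiff ℝ (⊤ : ℕ∞) (fun y => v y i) := contDiff_pi.mp hv i
  have hh' : h ≠ 0 := hh.ne'
  simp only [FPstar1, FPstar, dvg, lap, Witten1, gradNormSq]
  rw [Finset.sum_congr rfl (fun j _ => keyA hV hf h x j),
    Finset.sum_congr rfl (fun j _ => keyB hV hf h x j),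
    ← Finset.mul_sum, ← Finset.mul_sum,
    show (∑ j, hess V x i j * (v x j * Real.exp (-V x / h)))
        = Real.exp (-V x / h) * ∑ j, hess V x i j * v x j by
      rw [Finset.mul_sum]; exact Finset.sum_congr rfl fun j _ => by ring]
  have hexp : Real.exp (V x / h) * Real.exp (-V x / h) = 1 := by
    rw [← Real.exp_add, show V x / h + -V x / h = 0 by ring, Real.exp_zero]
  rw [show ∀ a b c : ℝ, Real.exp (V x / h)
        * (Real.exp (-V x / h) * a + β⁻¹ * (Real.exp (-V x / h) * b)
            - Real.exp (-V x / h) * c) = a + β⁻¹ * b - c from fun a b c => by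
      linear_combination (a + β⁻¹ * b - c) * hexp]
  rw [show (∑ j, ((pd j (fun y => v y i) x - v x i * pd j V x / h) * pd j V x
        + v x i * hess V x j j))
      = (∑ j, pd j (fun y => v y i) x * pd j V x)
        - v x i / h * (∑ j, (pd j V x) ^ 2) + v x i * (∑ j, hess V x j j) by
    rw [Finset.mul_sum, Finset.mul_sum, ← Finset.sum_sub_distrib, ← Finset.sum_add_distrib]
    exact Finset.sum_congr rfl fun j _ => by ring]
  rw [show (∑ j, (pd j (fun y => pd j (fun y => v y i) y) x
        - 2 / h * (pd j (fun y => v y i) x * pd j V x)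
        - v x i / h * hess V x j j + v x i / h ^ 2 * (pd j V x) ^ 2))
      = (∑ j, pd j (fun y => pd j (fun y => v y i) y) x)
        - 2 / h * (∑ j, pd j (fun y => v y i) x * pd j V x)
        - v x i / h * (∑ j, hess V x j j)
        + v x i / h ^ 2 * (∑ j, (pd j V x) ^ 2) by
    rw [Finset.mul_sum, Finset.mul_sum, Finset.mul_sum, ← Finset.sum_sub_distrib,
      ← Finset.sum_sub_distrib, ← Finset.sum_add_distrib]]
  simp only [hess]
  rw [hβ, inv_div]
  field_simp
  ring
end
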